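/- arXiv:2605.15648 — 4 statements merged into one kernel-verified Lean document; each statement's English description precedes it below -/
import Mathlib

section
/- Let 0 < σ₂ ≤ σ₁ ≤ 1. Then for every α ∈ [0,1], T(N(0,1), N(0,σ₂²))(α) ≤ T(N(0,1), N(0,σ₁²))(α), i.e., the trade-off function between a standard Gaussian and a centered Gaussian with smaller variance is pointwise smaller. -/
/-!
Data processing: pushing both hypotheses through a Markov kernel `κ` can only make testing harder,
since a test `φ` for the images yields the test `x ↦ ∫ φ d(κ x)` for the originals, with the same
errors. For variances `v₂ ≤ v₁ ≤ 1` the Gaussian channel `x ↦ N(c x, 1 - c²)` with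
`c² = (1 - v₁) / (1 - v₂)` fixes `N(0, 1)` and sends `N(0, v₂)` to `N(0, v₁)`, because
`N(c m, c² v) ∗ N(0, t) = N(c m, c² v + t)`.
-/

open MeasureTheory ProbabilityTheory

/-- The trade-off function `T(P,Q)(a)`: the infimum of Type II errors `1 - ∫ φ dQ`
over all measurable randomized rejection rules `φ : Ω → [0,1]` with Type I error
`∫ φ dP ≤ a`. -/
noncomputable def tradeOff {Ω : Type*} [MeasurableSpace Ω] (P Q : Measure Ω) (a : ℝ) : ℝ :=
  sInf { b : ℝ | ∃ φ : Ω → ℝ, Measurable φ ∧ (∀ x, φ x ∈ Set.Icc (0:ℝ) 1) ∧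
    (∫ x, φ x ∂P) ≤ a ∧ b = 1 - ∫ x, φ x ∂Q }

open scoped NNReal

section Tests

variable {Ω : Type*} [MeasurableSpace Ω] {μ : Measure Ω} {φ : Ω → ℝ}

lemma integrable_of_forall_mem_Icc [IsFiniteMeasure μ] (hφ : AEStronglyMeasurable φ μ)
    (h01 : ∀ x, φ x ∈ Set.Icc (0:ℝ) 1) : Integrable φ μ :=
  .of_bound hφ 1 <| ae_of_all _ fun x => by
    rw [Real.norm_of_nonneg (h01 x).1]; exact (h01 x).2

lemma integral_mem_Icc_of_forall_mem_Icc [IsProbabilityMeasure μ] (hφ : AEStronglyMeasurable φ μ)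
    (h01 : ∀ x, φ x ∈ Set.Icc (0:ℝ) 1) : ∫ x, φ x ∂μ ∈ Set.Icc (0:ℝ) 1 := by
  refine ⟨integral_nonneg fun x => (h01 x).1, ?_⟩
  calc ∫ x, φ x ∂μ ≤ ∫ _, (1:ℝ) ∂μ :=
        integral_mono (integrable_of_forall_mem_Icc hφ h01) (integrable_const 1) fun x => (h01 x).2
    _ = 1 := by simp

lemma tradeOff_of_neg (P Q : Measure Ω) {a : ℝ} (ha : a < 0) : tradeOff P Q a = 0 := by
  refine (congrArg sInf (Set.eq_empty_of_forall_notMem ?_)).trans Real.sInf_empty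
  rintro b ⟨φ, -, h01, hP, -⟩
  exact (integral_nonneg fun x => (h01 x).1).not_gt (hP.trans_lt ha)

end Tests

lemma MeasureTheory.Measure.integral_comp {Ω Ω' : Type*} [MeasurableSpace Ω] [MeasurableSpace Ω']
    {μ : Measure Ω} {κ : Kernel Ω Ω'} {f : Ω' → ℝ} (hf : Integrable f (κ ∘ₘ μ)) :
    ∫ y, f y ∂(κ ∘ₘ μ) = ∫ x, ∫ y, f y ∂κ x ∂μ := by
  rw [Measure.comp_eq_comp_const_apply] at hf ⊢
  rw [Kernel.integral_comp hf, Kernel.const_apply]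

theorem tradeOff_le_tradeOff_comp {Ω Ω' : Type*} [MeasurableSpace Ω] [MeasurableSpace Ω']
    (P Q : Measure Ω) [IsProbabilityMeasure P] [IsProbabilityMeasure Q]
    (κ : Kernel Ω Ω') [IsMarkovKernel κ] (a : ℝ) :
    tradeOff P Q a ≤ tradeOff (κ ∘ₘ P) (κ ∘ₘ Q) a := by
  rcases lt_or_ge a 0 with ha | ha
  · rw [tradeOff_of_neg _ _ ha, tradeOff_of_neg _ _ ha]
  apply csInf_le_csInf
  · refine ⟨0, ?_⟩
    rintro b ⟨φ, hφ, h01, -, rfl⟩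
    linarith [(integral_mem_Icc_of_forall_mem_Icc hφ.aestronglyMeasurable h01 (μ := Q)).2]
  · exact ⟨1, 0, measurable_const, fun _ => ⟨le_rfl, zero_le_one⟩, by simpa using ha, by simp⟩
  · rintro b ⟨φ, hφ, h01, hP, rfl⟩
    have hint (μ : Measure Ω) [IsFiniteMeasure μ] :
        ∫ y, φ y ∂(κ ∘ₘ μ) = ∫ x, ∫ y, φ y ∂κ x ∂μ :=
      Measure.integral_comp (integrable_of_forall_mem_Icc hφ.aestronglyMeasurable h01)
    refine ⟨fun x => ∫ y, φ y ∂κ x, hφ.stronglyMeasurable.integral_kernel.measurable,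
      fun x => integral_mem_Icc_of_forall_mem_Icc hφ.aestronglyMeasurable h01,
      hint P ▸ hP, by rw [hint Q]⟩

noncomputable def gaussianChannel (c : ℝ) (t : ℝ≥0) : Kernel ℝ ℝ where
  toFun x := gaussianReal (c * x) t
  measurable' := measurable_gaussianReal.comp (measurable_const_mul c |>.prodMk measurable_const)

@[simp]
lemma gaussianChannel_apply (c : ℝ) (t : ℝ≥0) (x : ℝ) :
    gaussianChannel c t x = gaussianReal (c * x) t := rfl

instance (c : ℝ) (t : ℝ≥0) : IsMarkovKernel (gaussianChannel c t) :=
  ⟨fun _ => inferInstanceAs (IsProbabilityMeasure (gaussianReal _ _))⟩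

lemma gaussianChannel_comp_gaussianReal (c m : ℝ) (v t : ℝ≥0) :
    gaussianChannel c t ∘ₘ gaussianReal m v =
      gaussianReal (c * m) ((.mk (c ^ 2) (sq_nonneg c) : ℝ≥0) * v + t) := by
  refine Measure.ext_of_lintegral _ fun f hf => ?_
  rw [← add_zero (c * m), ← gaussianReal_conv_gaussianReal, ← gaussianReal_map_const_mul,
    Measure.lintegral_bind (Kernel.aemeasurable _) hf.aemeasurable, Measure.lintegral_conv hf,
    lintegral_map (by fun_prop) (by fun_prop)]
  congr 1 with x
  rw [gaussianChannel_apply, ← lintegral_map hf (measurable_const_add (c * x)),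
    gaussianReal_map_const_add, zero_add]

theorem tradeOff_gaussianReal_le_of_le {v₁ v₂ : ℝ≥0} (h21 : v₂ ≤ v₁) (h1 : v₁ ≤ 1) (a : ℝ) :
    tradeOff (gaussianReal 0 1) (gaussianReal 0 v₂) a ≤
      tradeOff (gaussianReal 0 1) (gaussianReal 0 v₁) a := by
  set r : ℝ≥0 := (1 - v₁) / (1 - v₂)
  have hr1 : r ≤ 1 := div_le_one_of_le₀ (tsub_le_tsub_left h21 1) zero_le
  have hrv : r * v₂ + (1 - r) = v₁ := by
    rcases (h21.trans h1).eq_or_lt with h2 | h2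
    · -- here `r = 0 / 0 = 0`: the channel forgets its input
      obtain rfl : v₁ = 1 := le_antisymm h1 (h2 ▸ h21)
      simp [r, h2]
    · have hden : (1 - v₂ : ℝ≥0) ≠ 0 := (tsub_pos_of_lt h2).ne'
      have hr : r * (1 - v₂) = 1 - v₁ := div_mul_cancel₀ _ hden
      clear_value r
      apply NNReal.eq
      replace hr := congrArg NNReal.toReal hr
      push_cast [NNReal.coe_sub hr1, NNReal.coe_sub h2.le, NNReal.coe_sub h1] at hr ⊢
      linarith
  have hcomp : ∀ v : ℝ≥0, gaussianChannel (NNReal.sqrt r) (1 - r) ∘ₘ gaussianReal 0 v =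
      gaussianReal 0 (r * v + (1 - r)) := fun v => by
    rw [gaussianChannel_comp_gaussianReal, mul_zero]
    congr 2
    exact NNReal.eq (by simp)
  calc tradeOff (gaussianReal 0 1) (gaussianReal 0 v₂) a
      ≤ tradeOff (gaussianChannel (NNReal.sqrt r) (1 - r) ∘ₘ gaussianReal 0 1)
          (gaussianChannel (NNReal.sqrt r) (1 - r) ∘ₘ gaussianReal 0 v₂) a :=
        tradeOff_le_tradeOff_comp _ _ _ a
    _ = tradeOff (gaussianReal 0 1) (gaussianReal 0 v₁) a := by
        rw [hcomp, hcomp, hrv, mul_one, add_tsub_cancel_of_le hr1]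

theorem stmt_1_general (σ₁ σ₂ : ℝ) (hσ₂ : 0 < σ₂) (h21 : σ₂ ≤ σ₁) (h1 : σ₁ ≤ 1)
    (α : ℝ) :
    tradeOff (gaussianReal 0 1) (gaussianReal 0 (σ₂ ^ 2).toNNReal) α ≤
      tradeOff (gaussianReal 0 1) (gaussianReal 0 (σ₁ ^ 2).toNNReal) α :=
  tradeOff_gaussianReal_le_of_le
    (Real.toNNReal_le_toNNReal (pow_le_pow_left₀ hσ₂.le h21 2))
    (Real.toNNReal_le_one.2 (pow_le_one₀ (hσ₂.le.trans h21) h1)) α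

/-- for `0 < σ₂ ≤ σ₁ ≤ 1`, the trade-off function between a standard
Gaussian and a centered Gaussian with smaller variance is pointwise smaller. -/
theorem stmt_1 (σ₁ σ₂ : ℝ) (hσ₂ : 0 < σ₂) (h21 : σ₂ ≤ σ₁) (h1 : σ₁ ≤ 1)
    (α : ℝ) (hα : α ∈ Set.Icc (0:ℝ) 1) :
    tradeOff (gaussianReal 0 1) (gaussianReal 0 (σ₂ ^ 2).toNNReal) α ≤
      tradeOff (gaussianReal 0 1) (gaussianReal 0 (σ₁ ^ 2).toNNReal) α :=
  stmt_1_general σ₁ σ₂ hσ₂ h21 h1 α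
end

section
/- Let 0 < σ < 1 and μ₁ ≥ μ₂ ≥ 0. Then for every α ∈ [0,1], T(N(0,1), N(μ₁,σ²))(α) ≤ T(N(0,1), N(μ₂,σ²))(α): for a fixed variance σ² < 1, the trade-off function against N(μ,σ²) is pointwise non-increasing in the mean μ ≥ 0. -/
open MeasureTheory ProbabilityTheory

/-!
For `σ < 1` the likelihood ratio of `N(μ, σ²)` to `N(0, 1)` is a Gaussian bump centred at
`μ / (1 - σ²)`, so by Neyman–Pearson the optimal level-`α` test against `N(μ₂, σ²)` rejects on
the interval `I` of standard normal mass `α` centred at `m = μ₂ / (1 - σ²) ≥ 0`. The translate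
`I + (μ₁ - μ₂)` has the same mass under `N(μ₁, σ²)` as `I` under `N(μ₂, σ²)`, and, `I` being
centred at `m ≥ 0`, moving it to the right can only lower its standard normal mass; so it is an
admissible test against `N(μ₁, σ²)` with the same power. For `α ≥ 1` both sides vanish.
-/

open Set Filter Real

section TradeOff

variable {Ω : Type*} [MeasurableSpace Ω] {P Q : Measure Ω} {a : ℝ}

lemma integral_le_measureReal_univ [IsFiniteMeasure Q] {φ : Ω → ℝ}
    (hφ : ∀ x, φ x ∈ Icc (0 : ℝ) 1) : ∫ x, φ x ∂Q ≤ Q.real univ := by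
  have h := norm_integral_le_of_norm_le_const (μ := Q) (C := 1) <| ae_of_all _ fun x ↦
    (Real.norm_of_nonneg (hφ x).1).trans_le (hφ x).2
  rw [one_mul] at h
  exact (Real.le_norm_self _).trans h

lemma tradeOff_le [IsFiniteMeasure Q] {φ : Ω → ℝ} (hφm : Measurable φ)
    (hφ : ∀ x, φ x ∈ Icc (0 : ℝ) 1) (hP : ∫ x, φ x ∂P ≤ a) :
    tradeOff P Q a ≤ 1 - ∫ x, φ x ∂Q := by
  refine csInf_le ⟨1 - Q.real univ, ?_⟩ ⟨φ, hφm, hφ, hP, rfl⟩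
  rintro _ ⟨ψ, -, hψ, -, rfl⟩
  linarith [integral_le_measureReal_univ (Q := Q) hψ]

lemma tradeOff_le_one_sub_measureReal [IsFiniteMeasure Q] {s : Set Ω} (hs : MeasurableSet s)
    (hP : P.real s ≤ a) : tradeOff P Q a ≤ 1 - Q.real s := by
  have hind : ∀ x, s.indicator (1 : Ω → ℝ) x ∈ Icc (0 : ℝ) 1 := fun x ↦ by
    by_cases hx : x ∈ s <;> simp [hx]
  have h := tradeOff_le (Q := Q) (φ := s.indicator 1) (measurable_const.indicator hs) hind
    ((integral_indicator_one hs).trans_le hP)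
  rwa [integral_indicator_one hs] at h

lemma le_tradeOff {c : ℝ} (ha : 0 ≤ a)
    (h : ∀ φ : Ω → ℝ, Measurable φ → (∀ x, φ x ∈ Icc (0 : ℝ) 1) → ∫ x, φ x ∂P ≤ a →
      ∫ x, φ x ∂Q ≤ c) :
    1 - c ≤ tradeOff P Q a := by
  refine le_csInf ⟨_, 0, measurable_const, fun _ ↦ ⟨le_rfl, zero_le_one⟩, ?_, rfl⟩ ?_
  · simpa using ha
  · rintro _ ⟨φ, hφm, hφ, hP, rfl⟩
    linarith [h φ hφm hφ hP]

lemma tradeOff_nonneg [IsProbabilityMeasure Q] (ha : 0 ≤ a) : 0 ≤ tradeOff P Q a := by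
  simpa using le_tradeOff (P := P) (Q := Q) (c := 1) ha fun φ _ hφ _ ↦
    (integral_le_measureReal_univ hφ).trans_eq probReal_univ

lemma tradeOff_nonpos [IsProbabilityMeasure P] [IsProbabilityMeasure Q] (ha : 1 ≤ a) :
    tradeOff P Q a ≤ 0 := by
  simpa using tradeOff_le_one_sub_measureReal (P := P) (Q := Q) MeasurableSet.univ
    (probReal_univ.trans_le ha)

end TradeOff

lemma integral_mul_le_setIntegral_of_neymanPearson {Ω : Type*} [MeasurableSpace Ω]
    {ν : Measure Ω} {p q φ : Ω → ℝ} {s : Set Ω} {k : ℝ} (hp : Integrable p ν)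
    (hq : Integrable q ν) (hs : MeasurableSet s) (hk : 0 ≤ k)
    (hin : ∀ x ∈ s, k * p x ≤ q x) (hout : ∀ x ∉ s, q x ≤ k * p x)
    (hφm : Measurable φ) (hφ : ∀ x, φ x ∈ Icc (0 : ℝ) 1)
    (hsize : ∫ x, p x * φ x ∂ν ≤ ∫ x in s, p x ∂ν) :
    ∫ x, q x * φ x ∂ν ≤ ∫ x in s, q x ∂ν := by
  have hpos : ∀ x, 0 ≤ (s.indicator 1 x - φ x) * (q x - k * p x) := fun x ↦ by
    by_cases hx : x ∈ s
    · simp only [indicator_of_mem hx, Pi.one_apply]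
      exact mul_nonneg (sub_nonneg.2 (hφ x).2) (sub_nonneg.2 (hin x hx))
    · simp only [indicator_of_notMem hx, zero_sub, neg_mul, ← mul_neg, neg_sub]
      exact mul_nonneg (hφ x).1 (sub_nonneg.2 (hout x hx))
  have hbdd : ∀ᵐ x ∂ν, ‖φ x‖ ≤ 1 := ae_of_all _ fun x ↦
    (Real.norm_of_nonneg (hφ x).1).trans_le (hφ x).2
  have hφp : Integrable (fun x ↦ p x * φ x) ν := by
    simpa only [mul_comm] using hp.bdd_mul hφm.aestronglyMeasurable hbdd
  have hφq : Integrable (fun x ↦ q x * φ x) ν := by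
    simpa only [mul_comm] using hq.bdd_mul hφm.aestronglyMeasurable hbdd
  have hsp := hp.indicator hs
  have hsq := hq.indicator hs
  have hexpand : ∫ x, (s.indicator 1 x - φ x) * (q x - k * p x) ∂ν
      = (∫ x in s, q x ∂ν) - ∫ x, q x * φ x ∂ν
        - k * ((∫ x in s, p x ∂ν) - ∫ x, p x * φ x ∂ν) := by
    have hsplit : ∀ x, (s.indicator 1 x - φ x) * (q x - k * p x)
        = s.indicator q x - q x * φ x - k * (s.indicator p x - p x * φ x) := fun x ↦ by
      by_cases hx : x ∈ s <;> simp [hx] <;> ring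
    simp_rw [hsplit]
    rw [integral_sub (f := fun x ↦ s.indicator q x - q x * φ x)
      (g := fun x ↦ k * (s.indicator p x - p x * φ x)) (hsq.sub hφq)
      ((hsp.sub hφp).const_mul k), integral_const_mul,
      integral_sub hsq hφq, integral_sub hsp hφp, integral_indicator hs, integral_indicator hs]
  have hint := integral_nonneg (μ := ν) (f := fun x ↦ (s.indicator 1 x - φ x) * (q x - k * p x))
    hpos
  nlinarith [mul_le_mul_of_nonneg_left (sub_nonneg.2 hsize) hk]

lemma intervalIntegral_add_le_of_abs_le {f : ℝ → ℝ} (hf : ∀ x y, |x| ≤ |y| → f y ≤ f x)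
    (hfi : ∀ a b, IntervalIntegrable f volume a b) {a b δ : ℝ} (hab : a ≤ b) (hsum : 0 ≤ a + b)
    (hδ : 0 ≤ δ) :
    ∫ x in (a + δ)..(b + δ), f x ≤ ∫ x in a..b, f x := by
  have hcomm := intervalIntegral.integral_interval_sub_interval_comm' (hfi (a + δ) (b + δ))
    (hfi a b) (hfi (a + δ) a)
  have htrans : ∫ x in b..(b + δ), f x = ∫ x in a..(a + δ), f (x + (b - a)) := by
    rw [intervalIntegral.integral_comp_add_right]
    congr 1 <;> ring
  have hmono : ∫ x in a..(a + δ), f (x + (b - a)) ≤ ∫ x in a..(a + δ), f x := by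
    refine intervalIntegral.integral_mono_on (by linarith) ?_ (hfi _ _) fun x hx ↦
      hf _ _ (abs_le_abs (by linarith) (by linarith [hx.1]))
    simpa using (hfi (a + (b - a)) (a + δ + (b - a))).comp_add_right (b - a)
  linarith

lemma exists_intervalIntegral_sub_add_eq {f : ℝ → ℝ} (hf : Integrable f) (m : ℝ) {α : ℝ}
    (h0 : 0 ≤ α) (h1 : α < ∫ x, f x) : ∃ r, 0 ≤ r ∧ ∫ x in (m - r)..(m + r), f x = α := by
  set F : ℝ → ℝ := fun r ↦ ∫ x in (m - r)..(m + r), f x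
  have hfi : ∀ a b, IntervalIntegrable f volume a b := fun _ _ ↦ hf.intervalIntegrable
  have hF : Continuous F := by
    have hprim := intervalIntegral.continuous_primitive hfi 0
    have hsplit : F = fun r ↦ (∫ x in 0..(m + r), f x) - ∫ x in 0..(m - r), f x := funext fun r ↦
      (intervalIntegral.integral_interval_sub_left (hfi 0 _) (hfi 0 _)).symm
    rw [hsplit]
    fun_prop
  have hlim : Tendsto F atTop (nhds (∫ x, f x)) :=
    intervalIntegral_tendsto_integral hf (tendsto_atBot_add_const_left _ m tendsto_neg_atTop_atBot
      |>.congr fun r ↦ by ring) (tendsto_atTop_add_const_left _ m tendsto_id)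
  obtain ⟨R, hαR, hR⟩ :=
    ((hlim.eventually (eventually_ge_nhds h1)).and (eventually_ge_atTop 0)).exists
  obtain ⟨r, hr, hFr⟩ := intermediate_value_Icc hR hF.continuousOn ⟨by simpa [F] using h0, hαR⟩
  exact ⟨r, hr.1, hFr⟩

lemma measureReal_gaussianReal (μ : ℝ) {v : NNReal} (hv : v ≠ 0) (s : Set ℝ) :
    (gaussianReal μ v).real s = ∫ x in s, gaussianPDFReal μ v x := by
  rw [measureReal_def, gaussianReal_apply_eq_integral μ hv,
    ENNReal.toReal_ofReal (setIntegral_nonneg_of_ae (ae_of_all _ (gaussianPDFReal_nonneg μ v)))]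

lemma measureReal_gaussianReal_Icc (μ : ℝ) {v : NNReal} (hv : v ≠ 0) {a b : ℝ} (hab : a ≤ b) :
    (gaussianReal μ v).real (Icc a b) = ∫ x in a..b, gaussianPDFReal μ v x := by
  rw [measureReal_gaussianReal μ hv, integral_Icc_eq_integral_Ioc,
    intervalIntegral.integral_of_le hab]

lemma exists_measureReal_gaussianReal_Icc_eq (μ : ℝ) {v : NNReal} (hv : v ≠ 0) (m : ℝ) {α : ℝ}
    (h0 : 0 ≤ α) (h1 : α < 1) :
    ∃ r, 0 ≤ r ∧ (gaussianReal μ v).real (Icc (m - r) (m + r)) = α := by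
  obtain ⟨r, hr, hα⟩ := exists_intervalIntegral_sub_add_eq (integrable_gaussianPDFReal μ v) m h0
    (h1.trans_eq (integral_gaussianPDFReal_eq_one μ hv).symm)
  exact ⟨r, hr, by rwa [measureReal_gaussianReal_Icc μ hv (by linarith)]⟩

lemma gaussianPDFReal_zero_le_of_abs_le (v : NNReal) {x y : ℝ} (h : |x| ≤ |y|) :
    gaussianPDFReal 0 v y ≤ gaussianPDFReal 0 v x := by
  simp only [gaussianPDFReal, sub_zero]
  gcongr _ * exp (-?_ / _)
  exact sq_le_sq.2 h

lemma measureReal_gaussianReal_Icc_add_le {v : NNReal} (hv : v ≠ 0) {a b δ : ℝ} (hab : a ≤ b)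
    (hsum : 0 ≤ a + b) (hδ : 0 ≤ δ) :
    (gaussianReal 0 v).real (Icc (a + δ) (b + δ)) ≤ (gaussianReal 0 v).real (Icc a b) := by
  rw [measureReal_gaussianReal_Icc 0 hv hab, measureReal_gaussianReal_Icc 0 hv (by linarith)]
  exact intervalIntegral_add_le_of_abs_le (fun _ _ ↦ gaussianPDFReal_zero_le_of_abs_le v)
    (fun _ _ ↦ (integrable_gaussianPDFReal 0 v).intervalIntegrable) hab hsum hδ

lemma measureReal_gaussianReal_add_Icc_add (μ : ℝ) (v : NNReal) (a b δ : ℝ) :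
    (gaussianReal (μ + δ) v).real (Icc (a + δ) (b + δ)) = (gaussianReal μ v).real (Icc a b) := by
  rw [← gaussianReal_map_add_const,
    map_measureReal_apply (measurable_add_const δ) measurableSet_Icc, preimage_add_const_Icc,
    add_sub_cancel_right, add_sub_cancel_right]

lemma gaussianPDFReal_eq_mul_exp_mul_gaussianPDFReal_zero_one {σ : ℝ} (hσ0 : 0 < σ)
    (hσ1 : σ ≠ 1) (μ x : ℝ) :
    gaussianPDFReal μ (σ ^ 2).toNNReal x = σ⁻¹ * exp (μ ^ 2 / (2 * (1 - σ ^ 2)))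
      * exp (-((1 - σ ^ 2) / (2 * σ ^ 2)) * (x - μ / (1 - σ ^ 2)) ^ 2)
      * gaussianPDFReal 0 1 x := by
  have h1 : (1 : ℝ) - σ ^ 2 ≠ 0 := by
    intro h
    rcases sq_eq_one_iff.1 (by linarith : σ ^ 2 = 1) with h' | h'
    · exact hσ1 h'
    · linarith
  have hsqrt : √(2 * π * σ ^ 2) = √(2 * π) * σ := by
    rw [Real.sqrt_mul (by positivity), Real.sqrt_sq hσ0.le]
  have hexp : exp (μ ^ 2 / (2 * (1 - σ ^ 2)))
      * exp (-((1 - σ ^ 2) / (2 * σ ^ 2)) * (x - μ / (1 - σ ^ 2)) ^ 2) * exp (-(x - 0) ^ 2 / 2)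
      = exp (-(x - μ) ^ 2 / (2 * σ ^ 2)) := by
    rw [← exp_add, ← exp_add]
    congr 1
    field_simp
    ring
  simp only [gaussianPDFReal, Real.coe_toNNReal _ (sq_nonneg σ), NNReal.coe_one, mul_one, hsqrt,
    ← hexp]
  ring

lemma integral_gaussianReal_le_measureReal_Icc {σ : ℝ} (hσ0 : 0 < σ) (hσ1 : σ < 1) (μ : ℝ)
    {r : ℝ} (hr : 0 ≤ r) {φ : ℝ → ℝ} (hφm : Measurable φ) (hφ : ∀ x, φ x ∈ Icc (0 : ℝ) 1)
    (hsize : ∫ x, φ x ∂gaussianReal 0 1 ≤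
      (gaussianReal 0 1).real (Icc (μ / (1 - σ ^ 2) - r) (μ / (1 - σ ^ 2) + r))) :
    ∫ x, φ x ∂gaussianReal μ (σ ^ 2).toNNReal ≤
      (gaussianReal μ (σ ^ 2).toNNReal).real (Icc (μ / (1 - σ ^ 2) - r) (μ / (1 - σ ^ 2) + r)) := by
  have hratio := gaussianPDFReal_eq_mul_exp_mul_gaussianPDFReal_zero_one hσ0 hσ1.ne μ
  set m := μ / (1 - σ ^ 2)
  set c := (1 - σ ^ 2) / (2 * σ ^ 2)
  set C := σ⁻¹ * exp (μ ^ 2 / (2 * (1 - σ ^ 2)))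
  have hc : 0 ≤ c := div_nonneg (by nlinarith) (by positivity)
  have hv : (σ ^ 2).toNNReal ≠ 0 := by simpa using hσ0.ne'
  have hratio_anti : ∀ x {t u : ℝ}, t ≤ u →
      C * exp (-c * u) * gaussianPDFReal 0 1 x ≤ C * exp (-c * t) * gaussianPDFReal 0 1 x :=
    fun x t u htu ↦ mul_le_mul_of_nonneg_right (mul_le_mul_of_nonneg_left
      (exp_le_exp.2 (mul_le_mul_of_nonpos_left htu (neg_nonpos.2 hc))) (by positivity))
      (gaussianPDFReal_nonneg 0 1 x)
  rw [integral_gaussianReal_eq_integral_smul one_ne_zero,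
    measureReal_gaussianReal 0 one_ne_zero] at hsize
  rw [integral_gaussianReal_eq_integral_smul hv, measureReal_gaussianReal μ hv]
  simp only [smul_eq_mul] at hsize ⊢
  refine integral_mul_le_setIntegral_of_neymanPearson (k := C * exp (-c * r ^ 2))
    (integrable_gaussianPDFReal 0 1) (integrable_gaussianPDFReal _ _) measurableSet_Icc
    (by positivity) (fun x hx ↦ ?_) (fun x hx ↦ ?_) hφm hφ hsize
  · rw [hratio]
    exact hratio_anti x (sq_le_sq' (by linarith [hx.1]) (by linarith [hx.2]))
  · have hxm : r ≤ |x - m| := by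
      rw [mem_Icc, not_and_or, not_le, not_le] at hx
      rw [le_abs']
      rcases hx with hx | hx
      · left; linarith
      · right; linarith
    rw [hratio]
    exact hratio_anti x (sq_abs (x - m) ▸ pow_le_pow_left₀ hr hxm 2)

/-- for fixed variance `σ² < 1`, the trade-off function against
`N(μ,σ²)` is pointwise non-increasing in the mean `μ ≥ 0`. -/
theorem stmt_2 (σ μ₁ μ₂ : ℝ) (hσ0 : 0 < σ) (hσ1 : σ < 1)
    (hμ : μ₁ ≥ μ₂) (hμ₂ : μ₂ ≥ 0) (α : ℝ) (hα : α ∈ Set.Icc (0:ℝ) 1) :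
    tradeOff (gaussianReal 0 1) (gaussianReal μ₁ (σ ^ 2).toNNReal) α ≤
      tradeOff (gaussianReal 0 1) (gaussianReal μ₂ (σ ^ 2).toNNReal) α := by
  rcases lt_or_ge α 1 with hα1 | hα1
  · set m := μ₂ / (1 - σ ^ 2)
    have hm : 0 ≤ m := div_nonneg hμ₂ (by nlinarith)
    obtain ⟨r, hr, hPr⟩ := exists_measureReal_gaussianReal_Icc_eq 0 one_ne_zero m hα.1 hα1
    have hshift : (gaussianReal 0 1).real (Icc (m - r + (μ₁ - μ₂)) (m + r + (μ₁ - μ₂))) ≤ α :=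
      hPr ▸ measureReal_gaussianReal_Icc_add_le one_ne_zero (by linarith) (by linarith)
        (by linarith)
    calc tradeOff (gaussianReal 0 1) (gaussianReal μ₁ (σ ^ 2).toNNReal) α
        ≤ 1 - (gaussianReal μ₁ (σ ^ 2).toNNReal).real
            (Icc (m - r + (μ₁ - μ₂)) (m + r + (μ₁ - μ₂))) :=
          tradeOff_le_one_sub_measureReal measurableSet_Icc hshift
      _ = 1 - (gaussianReal μ₂ (σ ^ 2).toNNReal).real (Icc (m - r) (m + r)) := by
          rw [← measureReal_gaussianReal_add_Icc_add μ₂, add_sub_cancel]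
      _ ≤ tradeOff (gaussianReal 0 1) (gaussianReal μ₂ (σ ^ 2).toNNReal) α :=
          le_tradeOff hα.1 fun φ hφm hφ hP ↦
            integral_gaussianReal_le_measureReal_Icc hσ0 hσ1 μ₂ hr hφm hφ (hP.trans hPr.ge)
  · exact (tradeOff_nonpos hα1).trans (tradeOff_nonneg hα.1)
end

section
/- For 0 < σ < 1 and fixed α ∈ (0,1), the minimal Type II error β(y) for the optimal symmetric-interval test between N(0,1) and N(y,σ²) is strictly decreasing in y > 0. Concretely, if the rejection region is [z - t, z + t] with z = y/(1-σ²) and t = t(y) determined by Φ(z+t) - Φ(z-t) = α, then ∂β/∂y < 0. -/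
open MeasureTheory ProbabilityTheory

/-- The standard normal CDF `Φ`. -/
noncomputable def stdPhi (t : ℝ) : ℝ := ((gaussianReal 0 1) (Set.Iic t)).toReal

/-!
The half-width `t` is differentiable by the implicit function theorem, because the mass
`Φ(z + τ) - Φ(z - τ)` is strictly increasing in `τ`. With `E = exp (2 z τ)` one has
`φ(z - τ) = E φ(z + τ)`, and the acceptance interval `[σz - τ/σ, σz + τ/σ]` of the alternative has
the same product of centre and half-width, hence the same `E`. Differentiating the level condition
gives `(1 + E) t' = (E - 1) / (1 - σ²)`, and substituting this into the derivative of the power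
`Φ(σz + t/σ) - Φ(σz - t/σ)` leaves `φ(σz + t/σ) (E - 1) / σ > 0`.
-/

open Filter Topology

theorem HasStrictFDerivAt.differentiableAt_of_eventually_apply_eq
    {𝕜 E₁ E₂ F : Type*} [NontriviallyNormedField 𝕜]
    [NormedAddCommGroup E₁] [NormedSpace 𝕜 E₁] [CompleteSpace E₁]
    [NormedAddCommGroup E₂] [NormedSpace 𝕜 E₂] [CompleteSpace E₂]
    [NormedAddCommGroup F] [NormedSpace 𝕜 F] [CompleteSpace F]
    {f : E₁ × E₂ → F} {f' : E₁ × E₂ →L[𝕜] F} {g : E₁ → E₂} {x₀ : E₁} {c : F}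
    (hf : HasStrictFDerivAt f f' (x₀, g x₀)) (hf' : (f' ∘L .inr 𝕜 E₁ E₂).IsInvertible)
    (hinj : ∀ᶠ x in 𝓝 x₀, Function.Injective fun y => f (x, y))
    (hg : ∀ᶠ x in 𝓝 x₀, f (x, g x) = c) :
    DifferentiableAt 𝕜 g x₀ := by
  refine (hf.hasStrictFDerivAt_implicitFunctionOfProdDomain hf').differentiableAt
    |>.congr_of_eventuallyEq ?_
  filter_upwards [hf.eventually_apply_implicitFunctionOfProdDomain hf', hinj, hg]
    with x hψ hinjx hgx
  exact hinjx (hgx.trans (hg.self_of_nhds.symm.trans hψ.symm))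

theorem ContinuousLinearMap.isInvertible_of_apply_one_ne_zero {𝕜 : Type*}
    [NontriviallyNormedField 𝕜] {L : 𝕜 →L[𝕜] 𝕜} (hL : L 1 ≠ 0) : L.IsInvertible := by
  refine .of_inverse (g := (L 1)⁻¹ • .id 𝕜 𝕜) ?_ ?_ <;> ext <;> simp [hL]

lemma stdPhi_eq_integral (t : ℝ) : stdPhi t = ∫ x in Set.Iic t, gaussianPDFReal 0 1 x := by
  rw [stdPhi, gaussianReal_apply_eq_integral 0 one_ne_zero,
    ENNReal.toReal_ofReal (integral_nonneg fun x => gaussianPDFReal_nonneg 0 1 x)]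

lemma stdPhi_sub_stdPhi (a b : ℝ) :
    stdPhi b - stdPhi a = ∫ x in a..b, gaussianPDFReal 0 1 x := by
  have hint := integrable_gaussianPDFReal 0 1
  rw [stdPhi_eq_integral, stdPhi_eq_integral,
    intervalIntegral.integral_Iic_sub_Iic hint.integrableOn hint.integrableOn]

lemma hasStrictDerivAt_stdPhi (x : ℝ) : HasStrictDerivAt stdPhi (gaussianPDFReal 0 1 x) x := by
  have hcont : Continuous (gaussianPDFReal 0 1) := by unfold gaussianPDFReal; fun_prop
  have h : stdPhi = fun t => (∫ u in (0:ℝ)..t, gaussianPDFReal 0 1 u) + stdPhi 0 := by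
    funext t; rw [← stdPhi_sub_stdPhi]; ring
  rw [h]
  exact (hcont.integral_hasStrictDerivAt 0 x).add_const _

lemma strictMono_stdPhi : StrictMono stdPhi :=
  strictMono_of_hasDerivAt_pos (fun x => (hasStrictDerivAt_stdPhi x).hasDerivAt)
    fun x => gaussianPDFReal_pos 0 1 x one_ne_zero

lemma gaussianPDFReal_sub_eq_mul_exp (z τ : ℝ) :
    gaussianPDFReal 0 1 (z - τ) = gaussianPDFReal 0 1 (z + τ) * Real.exp (2 * z * τ) := by
  simp only [gaussianPDFReal, NNReal.coe_one, mul_assoc, ← Real.exp_add]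
  ring_nf

noncomputable def stdNormalMass (z τ : ℝ) : ℝ := stdPhi (z + τ) - stdPhi (z - τ)

lemma strictMono_stdNormalMass (z : ℝ) : StrictMono (stdNormalMass z) := fun _ _ h =>
  sub_lt_sub (strictMono_stdPhi (by linarith)) (strictMono_stdPhi (by linarith))

lemma HasStrictFDerivAt.stdNormalMass {E : Type*} [NormedAddCommGroup E] [NormedSpace ℝ E]
    {f g : E → ℝ} {f' g' : E →L[ℝ] ℝ} {x : E}
    (hf : HasStrictFDerivAt f f' x) (hg : HasStrictFDerivAt g g' x) :
    HasStrictFDerivAt (fun x => stdNormalMass (f x) (g x))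
      (gaussianPDFReal 0 1 (f x + g x) • (f' + g')
        - gaussianPDFReal 0 1 (f x - g x) • (f' - g')) x :=
  ((hasStrictDerivAt_stdPhi _).comp_hasStrictFDerivAt x (hf.add hg)).sub
    ((hasStrictDerivAt_stdPhi _).comp_hasStrictFDerivAt x (hf.sub hg))

lemma HasDerivAt.stdNormalMass {f g : ℝ → ℝ} {f' g' y : ℝ}
    (hf : HasDerivAt f f' y) (hg : HasDerivAt g g' y) :
    HasDerivAt (fun y => stdNormalMass (f y) (g y))
      (gaussianPDFReal 0 1 (f y + g y) *
        ((1 - Real.exp (2 * f y * g y)) * f' + (1 + Real.exp (2 * f y * g y)) * g')) y := by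
  have hadd : HasDerivAt (fun y => stdPhi (f y + g y))
      (gaussianPDFReal 0 1 (f y + g y) * (f' + g')) y :=
    (hasStrictDerivAt_stdPhi _).hasDerivAt.comp y (hf.add hg)
  have hsub : HasDerivAt (fun y => stdPhi (f y - g y))
      (gaussianPDFReal 0 1 (f y - g y) * (f' - g')) y :=
    (hasStrictDerivAt_stdPhi _).hasDerivAt.comp y (hf.sub hg)
  exact (hadd.sub hsub).congr_deriv (by rw [gaussianPDFReal_sub_eq_mul_exp]; ring)

lemma differentiableAt_of_stdNormalMass_div_eq {k c y₀ : ℝ} {t : ℝ → ℝ}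
    (ht : ∀ᶠ y in 𝓝 y₀, stdNormalMass (y / k) (t y) = c) : DifferentiableAt ℝ t y₀ := by
  have hf := (hasStrictFDerivAt_fst.mul_const k⁻¹).stdNormalMass
    (hasStrictFDerivAt_snd (p := (y₀, t y₀)))
  refine hf.differentiableAt_of_eventually_apply_eq ?_
    (.of_forall fun y => (strictMono_stdNormalMass (y * k⁻¹)).injective)
    (by simpa only [div_eq_mul_inv] using ht)
  refine ContinuousLinearMap.isInvertible_of_apply_one_ne_zero (ne_of_gt ?_)
  simpa using add_pos (gaussianPDFReal_pos 0 1 (y₀ * k⁻¹ + t y₀) one_ne_zero)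
    (gaussianPDFReal_pos 0 1 (y₀ * k⁻¹ - t y₀) one_ne_zero)

lemma exists_hasDerivAt_stdNormalMass_pos {σ α y₀ : ℝ} {t : ℝ → ℝ} (hσ0 : 0 < σ) (hσ1 : σ < 1)
    (hy₀ : 0 < y₀) (ht : 0 < t y₀)
    (heq : ∀ᶠ y in 𝓝 y₀, stdNormalMass (y / (1 - σ ^ 2)) (t y) = α) :
    ∃ d > 0, HasDerivAt (fun y => stdNormalMass (σ * y / (1 - σ ^ 2)) (t y / σ)) d y₀ := by
  set k := 1 - σ ^ 2 with hk_def
  have hk : 0 < k := by nlinarith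
  obtain ⟨t', ht'⟩ : ∃ t', HasDerivAt t t' y₀ :=
    ⟨_, (differentiableAt_of_stdNormalMass_div_eq heq).hasDerivAt⟩
  set E := Real.exp (2 * (y₀ / k) * t y₀)
  have hE : 1 < E := Real.one_lt_exp_iff.2 (by positivity)
  have hlevel : (1 - E) * (1 / k) + (1 + E) * t' = 0 := by
    have h := ((hasDerivAt_id' y₀).div_const k).stdNormalMass ht'
    have h0 : HasDerivAt (fun y => stdNormalMass (y / k) (t y)) 0 y₀ :=
      (hasDerivAt_const y₀ α).congr_of_eventuallyEq heq
    exact (mul_eq_zero.1 (h.unique h0)).resolve_left (gaussianPDFReal_pos 0 1 _ one_ne_zero).ne'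
  have hexp : Real.exp (2 * (σ * y₀ / k) * (t y₀ / σ)) = E := by
    congr 1; field_simp
  refine ⟨_, ?_, (((hasDerivAt_id' y₀).const_mul σ).div_const k).stdNormalMass (ht'.div_const σ)⟩
  clear_value k E
  have hderiv : (1 - E) * (σ / k) + (1 + E) * (t' / σ) = (E - 1) / σ := by
    field_simp at hlevel ⊢
    linear_combination hlevel + (1 - E) * hk_def
  rw [mul_one, hexp, hderiv]
  have := gaussianPDFReal_pos 0 1 (σ * y₀ / k + t y₀ / σ) one_ne_zero
  have : 0 < E - 1 := by linarith
  positivity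

theorem stmt_3_general (σ α : ℝ) (hσ0 : 0 < σ) (hσ1 : σ < 1)
    (t : ℝ → ℝ) (ht : ∀ y > 0, 0 < t y)
    (heq : ∀ y > 0,
      stdPhi (y / (1 - σ ^ 2) + t y) - stdPhi (y / (1 - σ ^ 2) - t y) = α) :
    StrictAntiOn
      (fun y => 1 - (stdPhi (σ * y / (1 - σ ^ 2) + t y / σ)
                      - stdPhi (σ * y / (1 - σ ^ 2) - t y / σ)))
      (Set.Ioi 0) ∧
    ∀ y > 0,
      deriv (fun y => 1 - (stdPhi (σ * y / (1 - σ ^ 2) + t y / σ)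
                      - stdPhi (σ * y / (1 - σ ^ 2) - t y / σ))) y < 0 := by
  have hβ : ∀ y > 0, ∃ d < 0, HasDerivAt
      (fun y => 1 - stdNormalMass (σ * y / (1 - σ ^ 2)) (t y / σ)) d y := by
    intro y hy
    obtain ⟨d, hd, h⟩ := exists_hasDerivAt_stdNormalMass_pos hσ0 hσ1 hy (ht y hy)
      (eventually_of_mem (Ioi_mem_nhds hy) heq)
    exact ⟨-d, neg_neg_of_pos hd, h.const_sub 1⟩
  have hderiv :
      ∀ y > 0, deriv (fun y => 1 - stdNormalMass (σ * y / (1 - σ ^ 2)) (t y / σ)) y < 0 := by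
    intro y hy
    obtain ⟨d, hd, h⟩ := hβ y hy
    rwa [h.deriv]
  refine ⟨strictAntiOn_of_deriv_neg (convex_Ioi 0) (fun y hy => ?_) ?_, hderiv⟩
  · obtain ⟨d, -, h⟩ := hβ y hy
    exact h.continuousAt.continuousWithinAt
  · rw [interior_Ioi]
    exact hderiv

/-- for `0 < σ < 1` and fixed `α ∈ (0,1)`, if for each `y > 0` the
rejection region is `[z - t(y), z + t(y)]` with `z = y/(1-σ²)` and `t(y) > 0`
determined by `Φ(z+t) - Φ(z-t) = α`, then the resulting Type II error
`β(y) = 1 - [Φ(σy/(1-σ²) + t(y)/σ) - Φ(σy/(1-σ²) - t(y)/σ)]` is strictly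
decreasing in `y > 0`, i.e. `∂β/∂y < 0`. -/
theorem stmt_3 (σ α : ℝ) (hσ0 : 0 < σ) (hσ1 : σ < 1) (hα : α ∈ Set.Ioo (0:ℝ) 1)
    (t : ℝ → ℝ) (ht : ∀ y > 0, 0 < t y)
    (heq : ∀ y > 0,
      stdPhi (y / (1 - σ ^ 2) + t y) - stdPhi (y / (1 - σ ^ 2) - t y) = α) :
    StrictAntiOn
      (fun y => 1 - (stdPhi (σ * y / (1 - σ ^ 2) + t y / σ)
                      - stdPhi (σ * y / (1 - σ ^ 2) - t y / σ)))
      (Set.Ioi 0) ∧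
    ∀ y > 0,
      deriv (fun y => 1 - (stdPhi (σ * y / (1 - σ ^ 2) + t y / σ)
                      - stdPhi (σ * y / (1 - σ ^ 2) - t y / σ))) y < 0 :=
  stmt_3_general σ α hσ0 hσ1 t ht heq
end

section
/- With the setup of the mixture lemma, for any α ∈ [0,1], T((P_I|I,I),(Q_I|I,I))(α) ≤ Σᵢ wᵢ T(Pᵢ,Qᵢ)(α): the trade-off function of the index-revealed mixture is upper bounded by the weighted average of per-component trade-off functions evaluated at the common level α. -/
open MeasureTheory ProbabilityTheory

/-- The joint distribution `(P_I | I, I)` of the index-revealed mixture. -/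
noncomputable def mixJoint {Ω : Type*} [MeasurableSpace Ω] {m : ℕ} (w : Fin m → ℝ)
    (P : Fin m → Measure Ω) : Measure (Ω × Fin m) :=
  ∑ i, (ENNReal.ofReal (w i)) • ((P i).prod (Measure.dirac i))

lemma integrable_of_bdd {Ω : Type*} [MeasurableSpace Ω] {μ : Measure Ω}
    [IsFiniteMeasure μ] {f : Ω → ℝ} (hf : Measurable f)
    (hb : ∀ x, f x ∈ Set.Icc (0:ℝ) 1) : Integrable f μ := by
  refine (integrable_const (1:ℝ)).mono' hf.aestronglyMeasurable ?_
  filter_upwards with x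
  rw [Real.norm_eq_abs, abs_of_nonneg (hb x).1]
  exact (hb x).2

lemma slice_int_mem {Ω : Type*} [MeasurableSpace Ω] {μ : Measure Ω}
    [IsProbabilityMeasure μ] {f : Ω → ℝ} (hf : Measurable f)
    (hb : ∀ x, f x ∈ Set.Icc (0:ℝ) 1) : (∫ x, f x ∂μ) ∈ Set.Icc (0:ℝ) 1 := by
  constructor
  · exact integral_nonneg fun x => (hb x).1
  · calc ∫ x, f x ∂μ ≤ ∫ _, (1:ℝ) ∂μ :=
        integral_mono (integrable_of_bdd hf hb) (integrable_const 1) fun x => (hb x).2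
    _ = 1 := by simp

lemma integral_mixJoint {Ω : Type*} [MeasurableSpace Ω] {m : ℕ} (w : Fin m → ℝ)
    (hw : ∀ i, 0 ≤ w i) (P : Fin m → Measure Ω)
    (hP : ∀ i, IsProbabilityMeasure (P i)) {ψ : Ω × Fin m → ℝ} (hψ : Measurable ψ)
    (hb : ∀ p, ψ p ∈ Set.Icc (0:ℝ) 1) :
    ∫ p, ψ p ∂(mixJoint w P) = ∑ i, w i * ∫ x, ψ (x, i) ∂(P i) := by
  have hPM : ∀ i : Fin m, (P i).prod (Measure.dirac i) = Measure.map (fun x => (x, i)) (P i) :=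
    fun i => Measure.prod_dirac i
  have hint : ∀ i : Fin m, Integrable ψ ((P i).prod (Measure.dirac i)) := by
    intro i
    haveI := hP i
    haveI : IsProbabilityMeasure ((P i).prod (Measure.dirac i)) := by infer_instance
    exact integrable_of_bdd hψ hb
  rw [mixJoint, integral_finset_sum_measure (fun i _ => by
    exact Integrable.smul_measure (hint i) (by simp))]
  refine Finset.sum_congr rfl fun i _ => ?_
  haveI := hP i
  rw [integral_smul_measure, ENNReal.toReal_ofReal (hw i), hPM i,
    integral_map (measurable_prodMk_right (y := i)).aemeasurable
      hψ.aestronglyMeasurable]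
  rfl

/-- the trade-off function of the index-revealed mixture is upper
bounded by the weighted average of the per-component trade-off functions
evaluated at the common level `α`. -/
theorem stmt_6 {Ω : Type*} [MeasurableSpace Ω] {m : ℕ} (w : Fin m → ℝ)
    (hw : ∀ i, 0 ≤ w i) (hw1 : ∑ i, w i = 1)
    (P Q : Fin m → Measure Ω)
    (hP : ∀ i, IsProbabilityMeasure (P i)) (hQ : ∀ i, IsProbabilityMeasure (Q i))
    (α : ℝ) (hα : α ∈ Set.Icc (0:ℝ) 1) :
    tradeOff (mixJoint w P) (mixJoint w Q) α ≤
      ∑ i, w i * tradeOff (P i) (Q i) α := by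
  refine le_of_forall_pos_le_add fun ε hε => ?_
  -- nonempty sets
  have hne : ∀ i : Fin m, Set.Nonempty { b : ℝ | ∃ φ : Ω → ℝ, Measurable φ ∧
      (∀ x, φ x ∈ Set.Icc (0:ℝ) 1) ∧ (∫ x, φ x ∂(P i)) ≤ α ∧ b = 1 - ∫ x, φ x ∂(Q i) } := by
    intro i
    haveI := hP i
    refine ⟨1 - ∫ _, α ∂(Q i), fun _ => α, measurable_const, fun _ => hα, ?_, rfl⟩
    simp
  -- choose near-optimal tests
  have hch : ∀ i : Fin m, ∃ φ : Ω → ℝ, Measurable φ ∧ (∀ x, φ x ∈ Set.Icc (0:ℝ) 1) ∧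
      (∫ x, φ x ∂(P i)) ≤ α ∧ 1 - ∫ x, φ x ∂(Q i) < tradeOff (P i) (Q i) α + ε := by
    intro i
    obtain ⟨b, hb, hlt⟩ := Real.lt_sInf_add_pos (hne i) hε
    obtain ⟨φ, hm, hbd, hint, rfl⟩ := hb
    exact ⟨φ, hm, hbd, hint, hlt⟩
  choose φ hφm hφb hφP hφQ using hch
  set ψ : Ω × Fin m → ℝ := fun p => φ p.2 p.1 with hψdef
  have hψm : Measurable ψ := measurable_from_prod_countable_left fun i => (hφm i)
  have hψb : ∀ p, ψ p ∈ Set.Icc (0:ℝ) 1 := fun p => hφb p.2 p.1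
  have hPint : ∫ p, ψ p ∂(mixJoint w P) = ∑ i, w i * ∫ x, φ i x ∂(P i) :=
    integral_mixJoint w hw P hP hψm hψb
  have hQint : ∫ p, ψ p ∂(mixJoint w Q) = ∑ i, w i * ∫ x, φ i x ∂(Q i) :=
    integral_mixJoint w hw Q hQ hψm hψb
  -- membership of the constructed test
  have hmem : (1 - ∫ p, ψ p ∂(mixJoint w Q)) ∈ { b : ℝ | ∃ φ' : Ω × Fin m → ℝ,
      Measurable φ' ∧ (∀ x, φ' x ∈ Set.Icc (0:ℝ) 1) ∧
      (∫ x, φ' x ∂(mixJoint w P)) ≤ α ∧ b = 1 - ∫ x, φ' x ∂(mixJoint w Q) } := by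
    refine ⟨ψ, hψm, hψb, ?_, rfl⟩
    rw [hPint]
    calc ∑ i, w i * ∫ x, φ i x ∂(P i) ≤ ∑ i, w i * α :=
        Finset.sum_le_sum fun i _ => mul_le_mul_of_nonneg_left (hφP i) (hw i)
      _ = α := by rw [← Finset.sum_mul, hw1, one_mul]
  have hbdd : BddBelow { b : ℝ | ∃ φ' : Ω × Fin m → ℝ,
      Measurable φ' ∧ (∀ x, φ' x ∈ Set.Icc (0:ℝ) 1) ∧
      (∫ x, φ' x ∂(mixJoint w P)) ≤ α ∧ b = 1 - ∫ x, φ' x ∂(mixJoint w Q) } := by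
    refine ⟨0, fun b hb => ?_⟩
    obtain ⟨φ', hm', hb', _, rfl⟩ := hb
    have := integral_mixJoint w hw Q hQ hm' hb'
    rw [this]
    have h1 : ∑ i, w i * ∫ x, φ' (x, i) ∂(Q i) ≤ 1 := by
      calc ∑ i, w i * ∫ x, φ' (x, i) ∂(Q i) ≤ ∑ i, w i * 1 := by
            refine Finset.sum_le_sum fun i _ => mul_le_mul_of_nonneg_left ?_ (hw i)
            haveI := hQ i
            exact (slice_int_mem (hm'.comp measurable_prodMk_right) fun x => hb' (x, i)).2
        _ = 1 := by simpa using hw1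
    linarith
  calc tradeOff (mixJoint w P) (mixJoint w Q) α ≤ 1 - ∫ p, ψ p ∂(mixJoint w Q) :=
      csInf_le hbdd hmem
    _ = ∑ i, w i * (1 - ∫ x, φ i x ∂(Q i)) := by
        rw [hQint]
        simp only [mul_sub, mul_one, Finset.sum_sub_distrib, hw1]
    _ ≤ ∑ i, w i * (tradeOff (P i) (Q i) α + ε) :=
        Finset.sum_le_sum fun i _ => mul_le_mul_of_nonneg_left (hφQ i).le (hw i)
    _ = ∑ i, w i * tradeOff (P i) (Q i) α + ε := by
        simp only [mul_add]
        rw [Finset.sum_add_distrib, ← Finset.sum_mul, hw1, one_mul]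
end
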